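/- Let q ∈ ℝ with 0 < q < 1, let k ≥ 1, let N ≥ k and t ∈ ℝ^N, and define c_i(x) = (1−q)^i x^i/(i(1−q^i)) and the q-Schur polynomial p̃_k(x,t) = p_k(t₁+c₁(x), …, t_k+c_k(x)) (with t_i = 0 for i > N). Then for every real x ≠ 0: (i) (D_q^x p̃_k)(x,t) = p̃_{k−1}(x,t), where D_q^x is the Jackson q-derivative in the variable x; and (ii) ∂p̃_k/∂t₁ (x,t) = p̃_{k−1}(x,t). -/

import Mathlib

/-!
Since `c_i(x) - c_i(qx) = ((1-q)x)^i / i`, the arguments of `p̃_k(x)` are those of `p̃_k(qx)`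
shifted by `u^i / i` with `u = (1-q)x`. Such a shift multiplies the generating series
`P = exp (Σ a_i z^i)` by `exp (-log (1 - u z)) = (1 - u z)⁻¹`, so
`p̃_k(x) = p̃_k(qx) + (1-q) x p̃_{k-1}(x)`, which is the Jackson identity. As formal series, `P`
is characterised by `P' = A' P` and `P(0) = 1`, and `(1 - u z) P_shifted` satisfies the same
equation. Differentiating the recursion for `p_k` in `y₁` gives `∂p_k/∂y₁ = p_{k-1}`, hence
the `t₁`-derivative.
-/

/-- The Jackson q-derivative `(D_q f)(x) = (f(qx) − f(x))/((q−1)x)`. -/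
noncomputable def jackson (q : ℝ) (f : ℝ → ℝ) : ℝ → ℝ :=
  fun x => (f (q * x) - f x) / ((q - 1) * x)

/-- The elementary Schur polynomials `p_n` in variables `X 1, X 2, …`, defined by the
generating function `Σ p_n z^n = exp(Σ_{k≥1} X_k z^k)`, via the equivalent recursion
`(n+1) p_{n+1} = Σ_{k=0}^{n} (k+1) X_{k+1} p_{n−k}`, with `p_0 = 1`. -/
noncomputable def schurPoly : ℕ → MvPolynomial ℕ ℝ
  | 0 => 1
  | n + 1 =>
      MvPolynomial.C (((n : ℝ) + 1)⁻¹) *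
        ∑ k ∈ Finset.range (n + 1),
          MvPolynomial.C ((k : ℝ) + 1) * MvPolynomial.X (k + 1) * schurPoly (n - k)
decreasing_by exact Nat.lt_succ_of_le (Nat.sub_le n k)

/-- The sequence `i ↦ t_i + c_i(x)` (1-based), where `c_i(x) = (1−q)^i x^i/(i(1−q^i))`
and `t_i = 0` for `i > N`. -/
noncomputable def shiftedArg (q x : ℝ) (N : ℕ) (t : Fin N → ℝ) : ℕ → ℝ :=
  fun i =>
    (if h : 1 ≤ i ∧ i - 1 < N then t ⟨i - 1, h.2⟩ else 0) +
      (1 - q) ^ i * x ^ i / ((i : ℝ) * (1 - q ^ i))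

/-- The q-Schur polynomial `p̃_k(x,t) = p_k(t + c(x))`. -/
noncomputable def qSchur (q : ℝ) (N : ℕ) (k : ℕ) (x : ℝ) (t : Fin N → ℝ) : ℝ :=
  MvPolynomial.eval (shiftedArg q x N t) (schurPoly k)

section SchurPoly

open MvPolynomial Finset

theorem C_mul_schurPoly_succ (n : ℕ) :
    C ((n : ℝ) + 1) * schurPoly (n + 1) =
      ∑ p ∈ antidiagonal n, C ((p.1 : ℝ) + 1) * X (p.1 + 1) * schurPoly p.2 := by
  rw [schurPoly, ← mul_assoc, ← C_mul, mul_inv_cancel₀ n.cast_add_one_ne_zero, C_1, one_mul,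
    Nat.sum_antidiagonal_eq_sum_range_succ (fun i j => C ((i : ℝ) + 1) * X (i + 1) * schurPoly j)]

theorem pderiv_one_schurPoly_succ (n : ℕ) : pderiv 1 (schurPoly (n + 1)) = schurPoly n := by
  induction n using Nat.strong_induction_on with
  | _ n ih =>
  have hpderivX :
      ∑ p ∈ antidiagonal n, C ((p.1 : ℝ) + 1) * pderiv 1 (X (p.1 + 1)) * schurPoly p.2 =
        schurPoly n := by
    rw [Nat.sum_antidiagonal_eq_sum_range_succ_mk, sum_range_succ']
    simp
  have hpderivP :
      ∑ p ∈ antidiagonal n, C ((p.1 : ℝ) + 1) * X (p.1 + 1) * pderiv 1 (schurPoly p.2) =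
        C (n : ℝ) * schurPoly n := by
    rcases n with _ | m
    · simp [schurPoly]
    · rw [Nat.sum_antidiagonal_succ', schurPoly, pderiv_one, mul_zero, zero_add, Nat.cast_succ,
        C_mul_schurPoly_succ]
      refine sum_congr rfl fun p hp => ?_
      rw [ih p.2 (by rw [HasAntidiagonal.mem_antidiagonal] at hp; omega)]
  have hC : C ((n : ℝ) + 1) * pderiv 1 (schurPoly (n + 1)) = C ((n : ℝ) + 1) * schurPoly n := by
    rw [← pderiv_C_mul, C_mul_schurPoly_succ, map_sum]
    simp only [pderiv_mul, pderiv_C, zero_mul, zero_add, sum_add_distrib]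
    rw [hpderivX, hpderivP, map_add, C_1]
    ring
  exact mul_left_cancel₀ (C_ne_zero.mpr n.cast_add_one_ne_zero) hC

theorem MvPolynomial.hasDerivAt_eval_update {𝕜 σ : Type*} [NontriviallyNormedField 𝕜]
    [DecidableEq σ] (P : MvPolynomial σ 𝕜) (s : σ → 𝕜) (i : σ) (c : 𝕜) :
    HasDerivAt (fun a => eval (Function.update s i a) P)
      (eval (Function.update s i c) (pderiv i P)) c := by
  induction P using MvPolynomial.induction_on with
  | C r => simpa using hasDerivAt_const c r
  | add p q hp hq =>
    simp only [map_add]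
    exact hp.add hq
  | mul_X p j hp =>
    simp only [pderiv_mul, map_add, eval_mul, eval_X]
    rcases eq_or_ne j i with rfl | hji
    · simp only [Function.update_self, pderiv_X_self, map_one]
      exact hp.mul (hasDerivAt_id' c)
    · simpa only [Function.update_of_ne hji, pderiv_X_of_ne hji, map_zero, mul_zero, add_zero]
        using hp.mul_const (s j)

end SchurPoly

namespace PowerSeries

theorem eq_of_derivative_eq_mul_self {k : Type*} [Field k] [CharZero k] {F H G : k⟦X⟧}
    (hF : derivative k F = G * F) (hH : derivative k H = G * H)
    (hH0 : constantCoeff H ≠ 0) (h0 : constantCoeff F = constantCoeff H) : F = H := by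
  have hHinv : H * H⁻¹ = 1 := PowerSeries.mul_inv_cancel H hH0
  have hquot : F * H⁻¹ = 1 := by
    refine derivative.ext ?_ ?_
    · rw [Derivation.leibniz, derivative_inv', hF, hH, derivative_one, smul_eq_mul, smul_eq_mul]
      linear_combination (-F * G * H⁻¹) * hHinv
    · rw [map_mul, constantCoeff_inv, h0, mul_inv_cancel₀ hH0, map_one]
  calc F = F * H⁻¹ * H := by rw [mul_assoc, mul_comm H⁻¹, hHinv, mul_one]
    _ = H := by rw [hquot, one_mul]

/-- `mk (u ^ i / i)` is `-log (1 - u X)`. -/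
theorem one_sub_C_mul_X_mul_derivative_mk_pow_div {k : Type*} [Field k] [CharZero k] (u : k) :
    (1 - C u * X) * derivative k (mk fun i => u ^ i / i) = C u := by
  ext n
  rcases n with _ | n
  · rw [coeff_mul]
    simp [coeff_derivative]
  · rw [sub_mul, one_mul, mul_assoc, map_sub, coeff_C_mul, coeff_succ_X_mul, coeff_derivative,
      coeff_derivative, coeff_mk, coeff_mk, coeff_C, if_neg n.succ_ne_zero]
    have : (n : k) + 1 + 1 ≠ 0 := by norm_cast
    push_cast
    field_simp
    ring

end PowerSeries

section SchurSeries

open PowerSeries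

noncomputable def schurSeries (a : ℕ → ℝ) : ℝ⟦X⟧ :=
  mk fun n => MvPolynomial.eval a (schurPoly n)

theorem derivative_schurSeries (a : ℕ → ℝ) :
    derivative ℝ (schurSeries a) = derivative ℝ (mk a) * schurSeries a := by
  ext n
  have h := congrArg (MvPolynomial.eval a) (C_mul_schurPoly_succ n)
  simp only [map_mul, MvPolynomial.eval_C, map_sum, MvPolynomial.eval_X] at h
  rw [coeff_derivative, coeff_mul, schurSeries, coeff_mk, mul_comm, h]
  simp only [coeff_derivative, coeff_mk]
  exact Finset.sum_congr rfl fun p _ => by ring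

theorem schurSeries_add_pow_div_mul (a : ℕ → ℝ) (u : ℝ) :
    schurSeries (fun i => a i + u ^ i / i) * (1 - C u * X) = schurSeries a := by
  have hmk : mk (fun i => a i + u ^ i / i) = mk a + mk fun i => u ^ i / (i : ℝ) := by
    ext; simp
  have hlin : derivative ℝ (1 - C u * X) = -C u := by simp
  refine eq_of_derivative_eq_mul_self (G := derivative ℝ (mk a)) ?_ (derivative_schurSeries a)
    ?_ ?_
  · rw [Derivation.leibniz, hlin, derivative_schurSeries, hmk, map_add, smul_eq_mul, smul_eq_mul]
    linear_combination schurSeries (fun i => a i + u ^ i / i) *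
      one_sub_C_mul_X_mul_derivative_mk_pow_div u
  · simp [schurSeries, schurPoly]
  · simp [schurSeries, schurPoly]

theorem eval_schurPoly_succ_add_pow_div (a : ℕ → ℝ) (u : ℝ) (n : ℕ) :
    MvPolynomial.eval (fun i => a i + u ^ i / i) (schurPoly (n + 1)) =
      MvPolynomial.eval a (schurPoly (n + 1)) +
        u * MvPolynomial.eval (fun i => a i + u ^ i / i) (schurPoly n) := by
  have h := congrArg (coeff (n + 1)) (schurSeries_add_pow_div_mul a u)
  rw [mul_sub, mul_one, map_sub, ← mul_assoc, coeff_succ_mul_X, mul_comm, coeff_C_mul] at h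
  simp only [schurSeries, coeff_mk] at h
  linarith

end SchurSeries

section QSchur

open MvPolynomial

variable {q : ℝ} {N : ℕ} {t : Fin N → ℝ}

theorem shiftedArg_eq_shiftedArg_mul_add (hq : ∀ i ≠ 0, q ^ i ≠ 1) (x : ℝ) :
    shiftedArg q x N t = fun i => shiftedArg q (q * x) N t i + ((1 - q) * x) ^ i / i := by
  funext i
  rcases eq_or_ne i 0 with rfl | hi
  · simp [shiftedArg]
  · have hqi : 1 - q ^ i ≠ 0 := sub_ne_zero.mpr (hq i hi).symm
    have hi' : (i : ℝ) ≠ 0 := Nat.cast_ne_zero.mpr hi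
    simp only [shiftedArg, mul_pow]
    field_simp
    ring

theorem qSchur_succ (hq : ∀ i ≠ 0, q ^ i ≠ 1) (m : ℕ) (x : ℝ) :
    qSchur q N (m + 1) x t = qSchur q N (m + 1) (q * x) t + (1 - q) * x * qSchur q N m x t := by
  unfold qSchur
  rw [shiftedArg_eq_shiftedArg_mul_add hq x]
  exact eval_schurPoly_succ_add_pow_div _ _ m

theorem jackson_qSchur_succ (hq : ∀ i ≠ 0, q ^ i ≠ 1) (m : ℕ) {x : ℝ} (hx : x ≠ 0) :
    jackson q (fun y => qSchur q N (m + 1) y t) x = qSchur q N m x t := by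
  have hq1 : q - 1 ≠ 0 := sub_ne_zero.mpr (by simpa using hq 1 one_ne_zero)
  rw [jackson, div_eq_iff (mul_ne_zero hq1 hx), qSchur_succ hq m x]
  ring

theorem shiftedArg_update (x : ℝ) (j : Fin N) (a : ℝ) :
    shiftedArg q x N (Function.update t j a) =
      Function.update (shiftedArg q x N t) ((j : ℕ) + 1)
        (shiftedArg q x N t ((j : ℕ) + 1) + (a - t j)) := by
  funext i
  rcases eq_or_ne i ((j : ℕ) + 1) with rfl | hi
  · simp only [shiftedArg, Function.update_self, add_tsub_cancel_right, le_add_iff_nonneg_left,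
      zero_le, Fin.is_lt, and_self, dite_true, Fin.eta]
    ring
  · rw [Function.update_of_ne hi]
    simp only [shiftedArg]
    congr 1
    split_ifs with h
    · exact Function.update_of_ne (fun hij => hi (by rw [← hij]; dsimp only; omega)) _ _
    · rfl

theorem hasDerivAt_qSchur_update (k : ℕ) (x : ℝ) (j : Fin N) :
    HasDerivAt (fun a => qSchur q N k x (Function.update t j a))
      (eval (shiftedArg q x N t) (pderiv ((j : ℕ) + 1) (schurPoly k))) (t j) := by
  set s := shiftedArg q x N t
  have hfun : (fun a => qSchur q N k x (Function.update t j a)) =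
      (fun b => eval (Function.update s ((j : ℕ) + 1) b) (schurPoly k)) ∘
        fun a => s ((j : ℕ) + 1) + (a - t j) := by
    funext a
    simp only [qSchur, shiftedArg_update, s, Function.comp_apply]
  have hshift : HasDerivAt (fun a => s ((j : ℕ) + 1) + (a - t j)) 1 (t j) :=
    ((hasDerivAt_id _).sub_const _).const_add _
  rw [hfun]
  exact ((hasDerivAt_eval_update _ s _ _).comp (t j) hshift).congr_deriv (by simp)

end QSchur

/-- The q-Schur polynomials satisfy `D_q^x p̃_k = p̃_{k−1}` and `∂p̃_k/∂t₁ = p̃_{k−1}`. -/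
theorem qSchur_jackson_and_deriv (q : ℝ) (hq0 : 0 < q) (hq1 : q < 1) (k N : ℕ)
    (hk : 1 ≤ k) (hkN : k ≤ N) (t : Fin N → ℝ) (x : ℝ) (hx : x ≠ 0) :
    jackson q (fun y => qSchur q N k y t) x = qSchur q N (k - 1) x t ∧
    deriv (fun a => qSchur q N k x (Function.update t (⟨0, by omega⟩ : Fin N) a))
        (t (⟨0, by omega⟩ : Fin N)) = qSchur q N (k - 1) x t := by
  obtain ⟨m, rfl⟩ : ∃ m, k = m + 1 := ⟨k - 1, by omega⟩
  have hq : ∀ i ≠ 0, q ^ i ≠ 1 := fun i hi => (pow_lt_one₀ hq0.le hq1 hi).ne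
  refine ⟨jackson_qSchur_succ hq m hx, ?_⟩
  rw [(hasDerivAt_qSchur_update (m + 1) x _).deriv]
  exact congrArg _ (pderiv_one_schurPoly_succ m)
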